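/- Let n ≥ 1 and let 0 ≤ i_1 < i_2 < … < i_n < s be integers. Then ∫ P_{2^{i_1}} P_{2^{i_2}} ⋯ P_{2^{i_n}} dν_s = (∫ P_{2^{i_1}} dν_s)(∫ P_{2^{i_2}} dν_s)⋯(∫ P_{2^{i_n}} dν_s) = (−1)^n ∏_{k=1}^n (r_{i_k}/2). -/

import Mathlib

open Polynomial

/-- `r γ s` : the recursively defined scales `r 0 = 1`, `r (s+1) = γ (s+1) * (r s)²`. -/
noncomputable def r (γ : ℕ → ℝ) : ℕ → ℝ
  | 0 => 1
  | s + 1 => γ (s + 1) * (r γ s) ^ 2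

/-- `P γ s` : the polynomial `P_{2^s}`, with `P_1 = X - 1` and
`P_{2^{s+1}} = P_{2^s} · (P_{2^s} + r_s)`. -/
noncomputable def P (γ : ℕ → ℝ) : ℕ → Polynomial ℝ
  | 0 => X - 1
  | s + 1 => P γ s * (P γ s + C (r γ s))

/-- The integral `∫ f dν_s` of a function `f` against the normalized counting measure `ν_s`
on the `2^s` (simple, real) zeros of `P_{2^s} + r_s/2`. -/
noncomputable def nuInt (γ : ℕ → ℝ) (s : ℕ) (f : ℝ → ℝ) : ℝ :=
  (((P γ s + C (r γ s / 2)).roots.map f).sum) / 2 ^ s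

/-
Let `c₁, c₂` be the roots of `y² - r_s y + c`. Then
`P_{2^{s+1}} + c = (P_{2^s} + c₁)(P_{2^s} + c₂)`, so the zeros of `P_{2^{s+1}} + c` are those
of `P_{2^s} + c₁` together with those of `P_{2^s} + c₂`. For `0 < c < r_s²/4` both `cᵢ` lie in
`(0, r_s)`, and `r_s ≤ r_{s-1}²/4` since `γ_s ≤ 1/4`, so the splitting iterates down to degree
one. On the zeros of `P_{2^s} + cᵢ` the factor `P_{2^s}` is the constant `-cᵢ`, and
`c₁ + c₂ = r_s`; by induction on `s`, the sum of `∏_{j ∈ T} P_{2^j}` over the zeros of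
`P_{2^s} + c` is `2^s ∏_{j ∈ T} (-r_j/2)` whenever all `j ∈ T` are `< s`, whatever the
admissible `c`.
-/

theorem r_pos {γ : ℕ → ℝ} (hγ : ∀ s, 0 < γ (s + 1)) (s : ℕ) : 0 < r γ s := by
  induction s with
  | zero => simp [r]
  | succ s ih => have := hγ s; simp only [r]; positivity

/-- The shifts `c` for which `P γ s + C c` is split by the argument below: for `s ≥ 1`, those
with `4 c < r_{s-1}²`; for `s = 0` any bound will do. -/
noncomputable def shiftBound (γ : ℕ → ℝ) : ℕ → ℝ
  | 0 => 1
  | s + 1 => r γ s ^ 2 / 4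

theorem r_le_shiftBound {γ : ℕ → ℝ} (hγ : ∀ s, γ (s + 1) ≤ 1 / 4) (s : ℕ) :
    r γ s ≤ shiftBound γ s := by
  cases s with
  | zero => simp [r, shiftBound]
  | succ s => simp only [r, shiftBound]; nlinarith [hγ s, sq_nonneg (r γ s)]

theorem P_monic_and_natDegree (γ : ℕ → ℝ) (s : ℕ) :
    (P γ s).Monic ∧ (P γ s).natDegree = 2 ^ s := by
  induction s with
  | zero => simpa [P] using ⟨monic_X_sub_C (1 : ℝ), natDegree_X_sub_C (1 : ℝ)⟩
  | succ s ih =>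
    obtain ⟨hm, hd⟩ := ih
    have hm' : (P γ s + C (r γ s)).Monic :=
      hm.add_of_left (degree_C_le.trans_lt (by simp [degree_eq_natDegree hm.ne_zero, hd]))
    refine ⟨hm.mul hm', ?_⟩
    rw [P, natDegree_mul hm.ne_zero hm'.ne_zero, natDegree_add_C, hd, pow_succ, mul_two]

theorem monic_P_add_C (γ : ℕ → ℝ) (s : ℕ) (c : ℝ) : (P γ s + C c).Monic := by
  obtain ⟨hm, hd⟩ := P_monic_and_natDegree γ s
  exact hm.add_of_left (degree_C_le.trans_lt (by simp [degree_eq_natDegree hm.ne_zero, hd]))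

theorem P_succ_add_C_mul {γ : ℕ → ℝ} {s : ℕ} {c₁ c₂ : ℝ} (hsum : c₁ + c₂ = r γ s) :
    P γ (s + 1) + C (c₁ * c₂) = (P γ s + C c₁) * (P γ s + C c₂) := by
  rw [P, ← hsum, C_mul, C_add]
  ring

theorem roots_P_succ_add_C_mul {γ : ℕ → ℝ} {s : ℕ} {c₁ c₂ : ℝ} (hsum : c₁ + c₂ = r γ s) :
    (P γ (s + 1) + C (c₁ * c₂)).roots = (P γ s + C c₁).roots + (P γ s + C c₂).roots := by
  rw [P_succ_add_C_mul hsum,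
    roots_mul ((monic_P_add_C γ s c₁).mul (monic_P_add_C γ s c₂)).ne_zero]

theorem exists_add_eq_mul_eq_mem_Ioo {R c : ℝ} (hc : 0 < c) (hcR : 4 * c < R ^ 2) (hR : 0 < R) :
    ∃ c₁ c₂ : ℝ, c₁ + c₂ = R ∧ c₁ * c₂ = c ∧ c₁ ∈ Set.Ioo 0 R ∧ c₂ ∈ Set.Ioo 0 R := by
  set d := √(R ^ 2 - 4 * c)
  have hd_sq : d ^ 2 = R ^ 2 - 4 * c := Real.sq_sqrt (by linarith)
  have hd_pos : 0 < d := Real.sqrt_pos.mpr (by linarith)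
  have hd_lt : d < R := by nlinarith
  refine ⟨(R - d) / 2, (R + d) / 2, by ring, by linear_combination -hd_sq / 4,
    ⟨by linarith, by linarith⟩, ⟨by linarith, by linarith⟩⟩

theorem sum_roots_map_eval_mul {R : Type*} [CommRing R] [IsDomain R] (p : R[X]) (c : R)
    (f : R → R) :
    ((p + C c).roots.map fun x => p.eval x * f x).sum = -c * ((p + C c).roots.map f).sum := by
  rw [← Multiset.sum_map_mul_left]
  congr 1
  refine Multiset.map_congr rfl fun x hx => ?_
  have hroot := (mem_roots'.mp hx).2
  rw [IsRoot, eval_add, eval_C] at hroot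
  rw [eq_neg_of_add_eq_zero_left hroot]

theorem sum_roots_P_add_C_map_prod {γ : ℕ → ℝ} (hγ_pos : ∀ s, 0 < γ (s + 1))
    (hγ_le : ∀ s, γ (s + 1) ≤ 1 / 4) (s : ℕ) {T : Finset ℕ} (hT : ∀ j ∈ T, j < s) {c : ℝ}
    (hc : c ∈ Set.Ioo 0 (shiftBound γ s)) :
    ((P γ s + C c).roots.map fun x => ∏ j ∈ T, (P γ j).eval x).sum
      = 2 ^ s * ∏ j ∈ T, (-r γ j / 2) := by
  induction s generalizing T c with
  | zero =>
    obtain rfl : T = ∅ := Finset.eq_empty_of_forall_notMem fun j hj => (hT j hj).not_ge j.zero_le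
    have hlin : P γ 0 + C c = X - C (1 - c) := by rw [P, C_sub, C_1]; ring
    rw [hlin, roots_X_sub_C]
    simp
  | succ s ih =>
    have hc_lt : 4 * c < r γ s ^ 2 := by
      have := hc.2
      rw [shiftBound] at this
      linarith
    obtain ⟨c₁, c₂, hsum, rfl, hc₁, hc₂⟩ := exists_add_eq_mul_eq_mem_Ioo hc.1 hc_lt (r_pos hγ_pos s)
    have hB := r_le_shiftBound hγ_le s
    have ih' : ∀ {T : Finset ℕ}, (∀ j ∈ T, j < s) → ∀ c' ∈ Set.Ioo 0 (r γ s),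
        ((P γ s + C c').roots.map fun x => ∏ j ∈ T, (P γ j).eval x).sum
          = 2 ^ s * ∏ j ∈ T, (-r γ j / 2) :=
      fun hT c' hc' => ih hT ⟨hc'.1, hc'.2.trans_le hB⟩
    rw [roots_P_succ_add_C_mul hsum, Multiset.map_add, Multiset.sum_add]
    by_cases hs : s ∈ T
    · have hT' : ∀ j ∈ T.erase s, j < s := fun j hj =>
        (Nat.lt_succ_iff.mp (hT j (Finset.mem_of_mem_erase hj))).lt_of_ne
          (Finset.ne_of_mem_erase hj)
      simp only [← Finset.mul_prod_erase T _ hs, sum_roots_map_eval_mul, ih' hT' _ hc₁,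
        ih' hT' _ hc₂]
      linear_combination (-(2 : ℝ) ^ s * ∏ j ∈ T.erase s, (-r γ j / 2)) * hsum
    · have hT' : ∀ j ∈ T, j < s := fun j hj =>
        (Nat.lt_succ_iff.mp (hT j hj)).lt_of_ne fun h => hs (h ▸ hj)
      rw [ih' hT' _ hc₁, ih' hT' _ hc₂, pow_succ]
      ring

theorem nuInt_prod_eval_P {γ : ℕ → ℝ} (hγ_pos : ∀ s, 0 < γ (s + 1))
    (hγ_le : ∀ s, γ (s + 1) ≤ 1 / 4) {s : ℕ} {T : Finset ℕ} (hT : ∀ j ∈ T, j < s) :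
    nuInt γ s (fun x => ∏ j ∈ T, (P γ j).eval x) = ∏ j ∈ T, (-r γ j / 2) := by
  have hr := r_pos hγ_pos s
  have hc : r γ s / 2 ∈ Set.Ioo 0 (shiftBound γ s) :=
    ⟨by positivity, by linarith [r_le_shiftBound hγ_le s]⟩
  rw [nuInt, sum_roots_P_add_C_map_prod hγ_pos hγ_le s hT hc]
  field_simp

theorem stmt_2_general (γ : ℕ → ℝ) (hγ : ∀ s : ℕ, 0 < γ (s + 1) ∧ γ (s + 1) < 1 / 4)
    (n s : ℕ) (i : Fin n → ℕ) (hmono : StrictMono i)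
    (hlt : ∀ k : Fin n, i k < s) :
    nuInt γ s (fun x => ∏ k : Fin n, (P γ (i k)).eval x) =
      ∏ k : Fin n, nuInt γ s (fun x => (P γ (i k)).eval x) ∧
    nuInt γ s (fun x => ∏ k : Fin n, (P γ (i k)).eval x) =
      (-1) ^ n * ∏ k : Fin n, (r γ (i k) / 2) := by
  have hγ_pos : ∀ s, 0 < γ (s + 1) := fun s => (hγ s).1
  have hγ_le : ∀ s, γ (s + 1) ≤ 1 / 4 := fun s => (hγ s).2.le
  have hprod : nuInt γ s (fun x => ∏ k, (P γ (i k)).eval x) = ∏ k, (-r γ (i k) / 2) := by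
    simpa [Finset.prod_image hmono.injective.injOn] using
      nuInt_prod_eval_P hγ_pos hγ_le (T := Finset.univ.image i) (by simpa using hlt)
  have hsingle : ∀ k, nuInt γ s (fun x => (P γ (i k)).eval x) = -r γ (i k) / 2 := fun k => by
    simpa using nuInt_prod_eval_P hγ_pos hγ_le (T := {i k}) (by simpa using hlt k)
  refine ⟨by simp only [hprod, hsingle], ?_⟩
  simp only [hprod, neg_div, Finset.prod_neg, Finset.card_univ, Fintype.card_fin]

theorem stmt_2 (γ : ℕ → ℝ) (hγ : ∀ s : ℕ, 0 < γ (s + 1) ∧ γ (s + 1) < 1 / 4)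
    (n s : ℕ) (hn : 1 ≤ n) (i : Fin n → ℕ) (hmono : StrictMono i)
    (hlt : ∀ k : Fin n, i k < s) :
    nuInt γ s (fun x => ∏ k : Fin n, (P γ (i k)).eval x) =
      ∏ k : Fin n, nuInt γ s (fun x => (P γ (i k)).eval x) ∧
    nuInt γ s (fun x => ∏ k : Fin n, (P γ (i k)).eval x) =
      (-1) ^ n * ∏ k : Fin n, (r γ (i k) / 2) :=
  stmt_2_general γ hγ n s i hmono hlt
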